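/- For every p with 2 ≤ p < ∞ there exists a bounded linear operator T : L_p → ℓ_2 which is not narrow. -/

import Mathlib

/-!
The inclusion `L_p[0,1] → L_2[0,1]`, `p ≥ 2`, is bounded and sends a sign on `[0,1]` to a
function of `L_2`-norm `1`. Composing it with a linear isometry `L_2[0,1] ≃ ℓ_2` gives an operator
`T` with `‖T x‖ = 1` for every sign `x` on `[0,1]`, so `T` is not narrow. The isometry exists
because `L_2[0,1]` is a separable Hilbert space which is infinite-dimensional (indicators of
disjoint intervals are orthogonal), so each of its Hilbert bases is countably infinite.
-/

open MeasureTheory Set Filter Topology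
open scoped ENNReal NNReal

/-- Lebesgue measure on `[0,1]`. -/
noncomputable def μ01 : Measure ℝ := volume.restrict (Set.Icc 0 1)

/-- `x` is a sign on the measurable set `A`: a.e. it takes values `±1` on `A`
and `0` outside of `A`. -/
def IsSignOn {p : ℝ≥0∞} (A : Set ℝ) (x : Lp ℝ p μ01) : Prop :=
  ∀ᵐ t ∂μ01, (t ∈ A → x t = 1 ∨ x t = -1) ∧ (t ∉ A → x t = 0)

/-- `T : L_p → X` is narrow: for every measurable `A ⊆ [0,1]` and every `ε > 0`
there is a mean zero sign `x` on `A` with `‖T x‖ < ε`. -/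
def IsNarrow {X : Type*} [NormedAddCommGroup X] [NormedSpace ℝ X] {p : ℝ≥0∞} [Fact (1 ≤ p)]
    (T : Lp ℝ p μ01 →L[ℝ] X) : Prop :=
  ∀ A : Set ℝ, A ⊆ Set.Icc 0 1 → MeasurableSet A → ∀ ε : ℝ, 0 < ε →
    ∃ x : Lp ℝ p μ01, IsSignOn A x ∧ (∫ t, x t ∂μ01) = 0 ∧ ‖T x‖ < ε

namespace Orthonormal

variable {𝕜 E ι : Type*} [RCLike 𝕜] [NormedAddCommGroup E] [InnerProductSpace 𝕜 E]

theorem one_le_dist {v : ι → E} (hv : Orthonormal 𝕜 v) {i j : ι} (hij : i ≠ j) :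
    1 ≤ dist (v i) (v j) := by
  have hsq : ‖v i - v j‖ ^ 2 = 2 := by
    rw [@norm_sub_sq 𝕜, hv.1 i, hv.1 j, hv.2 hij]
    norm_num
  rw [dist_eq_norm]
  nlinarith [norm_nonneg (v i - v j)]

theorem countable [TopologicalSpace.SeparableSpace E] {v : ι → E} (hv : Orthonormal 𝕜 v) :
    Countable ι := by
  have hinj : Function.Injective v := hv.linearIndependent.injective
  have : DiscreteTopology (range v) := DiscreteTopology.of_forall_le_dist one_pos <| by
    rintro ⟨_, i, rfl⟩ ⟨_, j, rfl⟩ hne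
    exact hv.one_le_dist fun hij => hne (by subst hij; rfl)
  have : Countable (range v) :=
    TopologicalSpace.separableSpace_iff_countable.mp inferInstance
  exact (rangeFactorization_injective.mpr hinj).countable

end Orthonormal

theorem exists_linearIsometryEquiv_lp_nat {𝕜 E : Type*} [RCLike 𝕜] [NormedAddCommGroup E]
    [InnerProductSpace 𝕜 E] [CompleteSpace E] [TopologicalSpace.SeparableSpace E]
    (hE : ¬ FiniteDimensional 𝕜 E) : Nonempty (E ≃ₗᵢ[𝕜] lp (fun _ : ℕ => 𝕜) 2) := by
  obtain ⟨w, b, -⟩ := exists_hilbertBasis 𝕜 E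
  have : Countable w := b.orthonormal.countable
  have : Infinite w := by
    by_contra hfin
    have : Finite w := not_infinite_iff_finite.mp hfin
    have : Fintype w := Fintype.ofFinite w
    exact hE (b.toOrthonormalBasis.toBasis.finiteDimensional_of_finite)
  obtain ⟨_⟩ := nonempty_denumerable w
  let e : ℕ ≃ w := (Denumerable.eqv w).symm
  have hdense : ⊤ ≤ (Submodule.span 𝕜 (range (b ∘ e))).topologicalClosure := by
    rw [EquivLike.range_comp, b.dense_span]
  exact ⟨(HilbertBasis.mk (b.orthonormal.comp e e.injective) hdense).repr⟩

namespace MeasureTheory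

open Function

variable {α : Type*} [MeasurableSpace α] {μ : Measure α}

theorem Lp.not_finiteDimensional_of_pairwise_disjoint {ι : Type*} [Infinite ι] {s : ι → Set α}
    (hs : ∀ i, MeasurableSet (s i)) (hμ : ∀ i, μ (s i) ≠ ∞) (hμ₀ : ∀ i, μ (s i) ≠ 0)
    (hd : Pairwise (Disjoint on s)) : ¬ FiniteDimensional ℝ (Lp ℝ 2 μ) := by
  intro _
  let f i : Lp ℝ 2 μ := indicatorConstLp 2 (hs i) (hμ i) 1
  have hinner i j : inner ℝ (f i) (f j) = μ.real (s i ∩ s j) :=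
    L2.real_inner_indicatorConstLp_one_indicatorConstLp_one (hs i) (hs j) (hμ i) (hμ j)
  refine Module.Finite.not_linearIndependent_of_infinite f
    (linearIndependent_of_ne_zero_of_inner_eq_zero (𝕜 := ℝ) (fun i hi => ?_) fun i j hij => ?_)
  · have := hinner i i
    rw [hi, inner_zero_left, inter_self, eq_comm, measureReal_eq_zero_iff (hμ i)] at this
    exact hμ₀ i this
  · show inner ℝ (f i) (f j) = 0
    rw [hinner, (hd hij).inter_eq, measureReal_empty]

variable {E : Type*} [NormedAddCommGroup E] [IsProbabilityMeasure μ] {p q : ℝ≥0∞}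

theorem Lp.norm_eq_one_of_ae_norm_eq_one (hp : p ≠ 0) {f : Lp E p μ}
    (hf : ∀ᵐ t ∂μ, ‖f t‖ = 1) : ‖f‖ = 1 := by
  have : eLpNorm f p μ = eLpNorm (fun _ => (1 : ℝ)) p μ :=
    eLpNorm_congr_norm_ae (by simpa using hf)
  rw [Lp.norm_def, this, eLpNorm_const _ hp (IsProbabilityMeasure.ne_zero μ)]
  simp

variable [Fact (1 ≤ p)] [Fact (1 ≤ q)] (𝕜 : Type*) [NormedField 𝕜] [NormedSpace 𝕜 E]

noncomputable def Lp.inclusion (hqp : q ≤ p) : Lp E p μ →L[𝕜] Lp E q μ :=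
  LinearMap.mkContinuous
    { toFun f := ((Lp.memLp f).mono_exponent hqp).toLp f
      map_add' f g := by
        rw [← MemLp.toLp_add]
        exact MemLp.toLp_congr _ _ (Lp.coeFn_add f g)
      map_smul' c f := by
        rw [RingHom.id_apply, ← MemLp.toLp_const_smul]
        exact MemLp.toLp_congr _ _ (Lp.coeFn_smul c f) }
    1 fun f => by
      show ‖((Lp.memLp f).mono_exponent hqp).toLp f‖ ≤ 1 * ‖f‖
      rw [one_mul, Lp.norm_toLp, Lp.norm_def]
      exact ENNReal.toReal_mono (Lp.eLpNorm_ne_top f)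
        (eLpNorm_le_eLpNorm_of_exponent_le hqp (Lp.aestronglyMeasurable f))

theorem Lp.coeFn_inclusion (hqp : q ≤ p) (f : Lp E p μ) :
    (Lp.inclusion 𝕜 hqp f : α → E) =ᵐ[μ] f :=
  MemLp.coeFn_toLp ((Lp.memLp f).mono_exponent hqp)

end MeasureTheory

instance : IsProbabilityMeasure μ01 := ⟨by simp [μ01, Real.volume_Icc]⟩

theorem not_finiteDimensional_L2_μ01 : ¬ FiniteDimensional ℝ (Lp ℝ 2 μ01) := by
  let f : ℕ → ℝ := fun n => ((n : ℝ) + 1)⁻¹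
  have hf : StrictAnti f := fun m n h => by
    simp only [f]
    gcongr
  refine Lp.not_finiteDimensional_of_pairwise_disjoint (fun _ => measurableSet_Ioc)
    (fun _ => measure_ne_top _ _) (fun n => ?_) hf.antitone.pairwise_disjoint_on_Ioc_succ
  have hsub : Ioc (f (Order.succ n)) (f n) ⊆ Icc 0 1 :=
    Ioc_subset_Icc_self.trans (Icc_subset_Icc (by positivity) (inv_le_one_of_one_le₀ (by simp)))
  rw [μ01, Measure.restrict_eq_self _ hsub, Real.volume_Ioc, ne_eq, ENNReal.ofReal_eq_zero,
    not_le, sub_pos]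
  exact hf (Order.lt_succ n)

theorem IsSignOn.ae_norm_eq_one {p : ℝ≥0∞} {x : Lp ℝ p μ01} (hx : IsSignOn (Icc 0 1) x) :
    ∀ᵐ t ∂μ01, ‖x t‖ = 1 := by
  filter_upwards [hx, ae_restrict_mem measurableSet_Icc] with t ht hmem
  rcases ht.1 hmem with h | h <;> simp [h]

theorem exists_non_narrow_Lp_to_l2_general (p : ℝ≥0∞) [Fact (1 ≤ p)] (hp2 : 2 ≤ p) :
    ∃ T : Lp ℝ p μ01 →L[ℝ] lp (fun _ : ℕ => ℝ) 2, ¬ IsNarrow T := by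
  -- the separability instance for `Lp` asks for a finite exponent as a `Fact`
  have : Fact ((2 : ℝ≥0∞) ≠ ∞) := ⟨ENNReal.ofNat_ne_top⟩
  obtain ⟨e⟩ := exists_linearIsometryEquiv_lp_nat not_finiteDimensional_L2_μ01
  refine ⟨(e : Lp ℝ 2 μ01 →L[ℝ] lp (fun _ : ℕ => ℝ) 2).comp (Lp.inclusion ℝ hp2), fun hT => ?_⟩
  obtain ⟨x, hx, -, hTx⟩ := hT (Icc 0 1) subset_rfl measurableSet_Icc 1 one_pos
  have hx₂ : ‖Lp.inclusion ℝ hp2 x‖ = 1 := by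
    refine Lp.norm_eq_one_of_ae_norm_eq_one two_ne_zero ?_
    filter_upwards [Lp.coeFn_inclusion ℝ hp2 x, hx.ae_norm_eq_one] with t ht hxt
    rw [ht, hxt]
  simp [hx₂] at hTx

/-- For every `2 ≤ p < ∞` there exists a bounded linear operator
`T : L_p[0,1] → ℓ₂` which is not narrow. -/
theorem exists_non_narrow_Lp_to_l2 (p : ℝ≥0∞) [Fact (1 ≤ p)] (hp2 : 2 ≤ p) (hp : p ≠ ∞) :
    ∃ T : Lp ℝ p μ01 →L[ℝ] lp (fun _ : ℕ => ℝ) 2, ¬ IsNarrow T :=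
  exists_non_narrow_Lp_to_l2_general p hp2
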